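/- For every w ∈ 𝔡_1 and all positive integers s, s' and N, one has Σ_{N>M_1>M_2>0} f_{s'}(N,M_1) f_s(M_1,M_2) A_w(M_2) = Σ_{N>M>0} f_{s'}(N,M) A_{φ_s(w)}(M). -/

import Mathlib

open scoped BigOperators

noncomputable section

attribute [local instance 10] Classical.propDecidable

/-- The `q`-integer `[n] = (1 - q^n)/(1 - q)`. -/
def qint (q : ℝ) (n : ℕ) : ℝ := (1 - q ^ n) / (1 - q)

/-- `I(r,n)`: multi-indices of positive integers of depth `r` and weight `n`. -/
def Ifin (r n : ℕ) : Finset (Fin r → ℕ) :=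
  (Fintype.piFinset fun _ : Fin r => Finset.Icc 1 n).filter fun c => (∑ i, c i) = n

/-- `I₀(r,n)`: admissible multi-indices (first entry at least 2). -/
def I0fin (r n : ℕ) : Finset (Fin r → ℕ) :=
  (Ifin r n).filter fun c => ∀ h : 0 < r, 2 ≤ c ⟨0, h⟩

/-- The `q`-analogue of the multiple zeta value,
`ζ_q(α) = Σ_{m_1 > ... > m_r > 0} Π_j q^{(α_j - 1) m_j}/[m_j]^{α_j}`. -/
def zetaQ (q : ℝ) {r : ℕ} (α : Fin r → ℕ) : ℝ :=
  ∑' m : {m : Fin r → ℕ // (∀ i j : Fin r, i < j → m j < m i) ∧ ∀ i, 0 < m i},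
    ∏ j, q ^ ((α j - 1) * m.1 j) / qint q (m.1 j) ^ α j

/-- `K_{b,n}(M) = Σ_{α ∈ I₀(b,n)} Σ_{m_1 > ... > m_{b-1} > m_b = M} Π_j q^{(α_j-1)m_j}/[m_j]^{α_j}`. -/
def Kfun (q : ℝ) (b n M : ℕ) : ℝ :=
  ∑ α ∈ I0fin b n,
    ∑' m : {m : Fin b → ℕ //
        (∀ i j : Fin b, i < j → m j < m i) ∧
          ∀ h : 0 < b, m ⟨b - 1, Nat.sub_lt h Nat.one_pos⟩ = M},
      ∏ j, q ^ ((α j - 1) * m.1 j) / qint q (m.1 j) ^ α j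

/-- `f_ℓ(N,M) = Σ_{N = k_1 > k_2 > ... > k_ℓ > M} (q^{k_1-M}/[k_1-M]) Π_{j=2}^{ℓ} 1/[k_j-M]`. -/
def fS (q : ℝ) (l N M : ℕ) : ℝ :=
  ∑ k ∈ (Fintype.piFinset fun _ : Fin l => Finset.Ioc M N).filter
      (fun k => (∀ i j : Fin l, i < j → k j < k i) ∧ ∀ h : 0 < l, k ⟨0, h⟩ = N),
    ∏ j : Fin l, (if (j : ℕ) = 0 then q ^ (k j - M) else 1) / qint q (k j - M)

/-- `g_{ℓ,β}(M) = Σ_{M = m_1 ≥ m_2 ≥ ... ≥ m_ℓ ≥ 1} (q^{(β-1)m_1}/[m_1]^β) Π_{j=2}^{ℓ} q^{m_j}/[m_j]`. -/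
def gS (q : ℝ) (l β M : ℕ) : ℝ :=
  ∑ m ∈ (Fintype.piFinset fun _ : Fin l => Finset.Icc 1 M).filter
      (fun m => (∀ i j : Fin l, i ≤ j → m j ≤ m i) ∧ ∀ h : 0 < l, m ⟨0, h⟩ = M),
    ∏ j : Fin l, if (j : ℕ) = 0 then q ^ ((β - 1) * m j) / qint q (m j) ^ β
      else q ^ m j / qint q (m j)

/-- `h_{r,ℓ}(N_1,...,N_r,M) = Σ_{c ∈ I(r,ℓ)} (Π_{j=1}^{r-1} f_{c_j}(N_j,N_{j+1})) f_{c_r}(N_r,M)`. -/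
def hS (q : ℝ) (r l : ℕ) (N : Fin r → ℕ) (M : ℕ) : ℝ :=
  ∑ c ∈ Ifin r l,
    ∏ j : Fin r, fS q (c j) (N j) (if h : (j : ℕ) + 1 < r then N ⟨(j : ℕ) + 1, h⟩ else M)

/-- `p(n_1,...,n_s;m) = (q^{n_1-m}/[n_1-m]) Π_{j=2}^{s} 1/[n_j-m]`, with `p(∅;m) = 1`. -/
def pS (q : ℝ) {s : ℕ} (n : Fin s → ℕ) (m : ℕ) : ℝ :=
  ∏ j : Fin s, (if (j : ℕ) = 0 then q ^ (n j - m) else 1) / qint q (n j - m)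

/-! ### The algebras 𝔡, 𝔡_ξ and 𝔡₁ -/

/-- The alphabet `S = {z_k}_{k ≥ 1} ∪ {ξ_k}_{k ≥ 1}`: `Sum.inl k = z_k`, `Sum.inr k = ξ_k`. -/
abbrev Letter : Type := ℕ+ ⊕ ℕ+

/-- The noncommutative polynomial algebra 𝔡 over ℤ freely generated by `S`. -/
abbrev Dfree : Type := MonoidAlgebra ℤ (FreeMonoid Letter)

/-- The subalgebra 𝔡_ξ generated by the `ξ_k`, realized as a free algebra on `{ξ_k}_{k≥1}`. -/
abbrev DXi : Type := MonoidAlgebra ℤ (FreeMonoid ℕ+)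

/-- The subalgebra 𝔡₁ generated by `z_1` and `ξ_1`, realized as a free algebra on two letters
(`false = z_1`, `true = ξ_1`). -/
abbrev DOne : Type := MonoidAlgebra ℤ (FreeMonoid Bool)

/-- The generator `z_k` of 𝔡. -/
def zL (k : ℕ+) : Dfree := MonoidAlgebra.single (FreeMonoid.of (Sum.inl k)) 1

/-- The generator `ξ_k` of 𝔡. -/
def xiL (k : ℕ+) : Dfree := MonoidAlgebra.single (FreeMonoid.of (Sum.inr k)) 1

/-- The generator `ξ_k` of 𝔡_ξ. -/
def xiX (k : ℕ+) : DXi := MonoidAlgebra.single (FreeMonoid.of k) 1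

/-- The generator `z_1` of 𝔡₁. -/
def zO : DOne := MonoidAlgebra.single (FreeMonoid.of false) 1

/-- The generator `ξ_1` of 𝔡₁. -/
def xiO : DOne := MonoidAlgebra.single (FreeMonoid.of true) 1

/-- `z_k` for a natural number index `k ≥ 1` (junk value `0` for `k = 0`). -/
def zOf (k : ℕ) : Dfree := if h : 0 < k then zL ⟨k, h⟩ else 0

/-- `ξ_k ∈ 𝔡_ξ` for a natural number index `k ≥ 1` (junk value `0` for `k = 0`). -/
def xiOf (k : ℕ) : DXi := if h : 0 < k then xiX ⟨k, h⟩ else 0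

/-- The canonical embedding `𝔡_ξ ↪ 𝔡`. -/
def toD (v : DXi) : Dfree := MonoidAlgebra.ofCoeff (Finsupp.mapDomain (FreeMonoid.map Sum.inr) v.coeff)

/-- The canonical embedding `𝔡₁ ↪ 𝔡` (`false ↦ z_1`, `true ↦ ξ_1`). -/
def toD1 (w : DOne) : Dfree :=
  MonoidAlgebra.ofCoeff (Finsupp.mapDomain (FreeMonoid.map fun b => if b then Sum.inr 1 else Sum.inl 1) w.coeff)

/-- `J_{z_k}(m) = q^{(k-1)m}/[m]^k` and `J_{ξ_k}(m) = q^{km}/[m]^k`. -/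
def Jlet (q : ℝ) : Letter → ℕ → ℝ
  | Sum.inl k, m => q ^ (((k : ℕ) - 1) * m) / qint q m ^ (k : ℕ)
  | Sum.inr k, m => q ^ ((k : ℕ) * m) / qint q m ^ (k : ℕ)

/-- `A_w(M) = Σ_{M > m_1 > ... > m_r > 0} J_{u_1}(m_1) ⋯ J_{u_r}(m_r)` for a word `w = u_1 ⋯ u_r`. -/
def AW (q : ℝ) (w : List Letter) (M : ℕ) : ℝ :=
  ∑ m ∈ (Fintype.piFinset fun _ : Fin w.length => Finset.Ioo 0 M).filter
      (fun m => ∀ i j, i < j → m j < m i),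
    ∏ j, Jlet q (w.get j) (m j)

/-- `A*_w(M) = Σ_{M > m_1 ≥ ... ≥ m_r ≥ 1} J_{u_1}(m_1) ⋯ J_{u_r}(m_r)` for a word `w = u_1 ⋯ u_r`. -/
def AstarW (q : ℝ) (w : List Letter) (M : ℕ) : ℝ :=
  ∑ m ∈ (Fintype.piFinset fun _ : Fin w.length => Finset.Ioo 0 M).filter
      (fun m => ∀ i j, i ≤ j → m j ≤ m i),
    ∏ j, Jlet q (w.get j) (m j)

/-- The ℤ-linear extension `A(M) : 𝔡 → ℝ`. -/
def Amap (q : ℝ) (x : Dfree) (M : ℕ) : ℝ :=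
  Finsupp.sum x.coeff fun w a => (a : ℝ) * AW q (FreeMonoid.toList w) M

/-- The ℤ-linear extension `A*(M) : 𝔡 → ℝ`. -/
def Astarmap (q : ℝ) (x : Dfree) (M : ℕ) : ℝ :=
  Finsupp.sum x.coeff fun w a => (a : ℝ) * AstarW q (FreeMonoid.toList w) M

/-- The map `ρ` on words:  `ρ(1,w) = w`, `ρ(v,1) = v`,
`ρ(ξ_k v, z_ℓ w) = ξ_k ρ(v, z_ℓ w) + z_ℓ ρ(ξ_k v, w) + z_{k+ℓ} ρ(v,w)`, and
`ρ(ξ_k v, ξ_ℓ w) = ξ_k ρ(v, ξ_ℓ w) + ξ_ℓ ρ(ξ_k v, w) + ξ_{k+ℓ} ρ(v,w)`. -/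
def rhoW : List ℕ+ → List Letter → Dfree
  | [], w => MonoidAlgebra.single (FreeMonoid.ofList w) 1
  | k :: v, [] => MonoidAlgebra.single (FreeMonoid.ofList ((k :: v).map Sum.inr)) 1
  | k :: v, Sum.inl l :: w =>
      xiL k * rhoW v (Sum.inl l :: w) + zL l * rhoW (k :: v) w + zL (k + l) * rhoW v w
  | k :: v, Sum.inr l :: w =>
      xiL k * rhoW v (Sum.inr l :: w) + xiL l * rhoW (k :: v) w + xiL (k + l) * rhoW v w
  termination_by v w => v.length + w.length

/-- The ℤ-bilinear map `ρ : 𝔡_ξ × 𝔡 → 𝔡`. -/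
def rho (v : DXi) (x : Dfree) : Dfree :=
  Finsupp.sum v.coeff fun vw a =>
    Finsupp.sum x.coeff fun xw b => (a * b) • rhoW (FreeMonoid.toList vw) (FreeMonoid.toList xw)

/-- `ξ_k ∘ ·` on words: `ξ_k ∘ 1 = 0` and `ξ_k ∘ (ξ_ℓ v) = ξ_{k+ℓ} v`. -/
def circW (k : ℕ+) : List ℕ+ → DXi
  | [] => 0
  | l :: v => MonoidAlgebra.single (FreeMonoid.ofList ((k + l) :: v)) 1

/-- The ℤ-linear map `ξ_k ∘ · : 𝔡_ξ → 𝔡_ξ`. -/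
def circ (k : ℕ+) (x : DXi) : DXi :=
  Finsupp.sum x.coeff fun w a => a • circW k (FreeMonoid.toList w)

/-- The map `d` on words: `d(1) = 1` and `d(ξ_k v) = ξ_k d(v) + ξ_k ∘ d(v)`. -/
def dW : List ℕ+ → DXi
  | [] => 1
  | k :: v => xiX k * dW v + circ k (dW v)

/-- The ℤ-linear map `d : 𝔡_ξ → 𝔡_ξ`. -/
def dmap (v : DXi) : DXi := Finsupp.sum v.coeff fun w a => a • dW (FreeMonoid.toList w)

/-- The maps `φ_s` on words of 𝔡₁: `φ_0 = id`, `φ_s(1) = ξ_1 z_1^{s-1}` for `s ≥ 1`,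
`φ_s(z_1 w) = z_1 φ_s(w) + ξ_1 Σ_{i=1}^{s} z_1^i φ_{s-i}(w)`, and
`φ_s(ξ_1 w) = ξ_1 Σ_{i=0}^{s} z_1^i φ_{s-i}(w)`. -/
def phiW : ℕ → List Bool → DOne
  | s, [] =>
      if s = 0 then 1
      else MonoidAlgebra.single (FreeMonoid.ofList (true :: List.replicate (s - 1) false)) 1
  | s, false :: w =>
      zO * phiW s w +
        ∑ i ∈ Finset.Icc 1 s, xiO * zO ^ i * phiW (s - i) w
  | s, true :: w =>
      ∑ i ∈ Finset.range (s + 1), xiO * zO ^ i * phiW (s - i) w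
  termination_by _ w => w.length

/-- The ℤ-linear maps `φ_s : 𝔡₁ → 𝔡₁`. -/
def phi (s : ℕ) (x : DOne) : DOne := Finsupp.sum x.coeff fun w a => a • phiW s (FreeMonoid.toList w)

/-- `Φ_0 = id` and `Φ_ℓ = Σ_{r=1}^{ℓ} (-1)^r Σ_{c ∈ I(r,ℓ)} φ_{c_1} ⋯ φ_{c_r}` for `ℓ ≥ 1`. -/
def PhiM : ℕ → DOne → DOne
  | 0 => id
  | l + 1 => fun x =>
      ∑ r ∈ Finset.Icc 1 (l + 1),
        (-1 : ℤ) ^ r •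
          ∑ c ∈ Ifin r (l + 1), ((List.ofFn fun j : Fin r => phi (c j)).foldr (· ∘ ·) id) x

/-- `Z_s(w) = Σ_{ℓ=0}^{s} ρ(d(ξ_1^{s-ℓ}), Φ_ℓ(w))`. -/
def Zmap (s : ℕ) (w : DOne) : Dfree :=
  ∑ l ∈ Finset.range (s + 1), rho (dmap (xiX 1 ^ (s - l))) (toD1 (PhiM l w))

/-!
Write `I_u` for the operator `h ↦ (N ↦ ∑_{0<m<N} J_u(m) h(m))`, so that `A_{u w} = I_u A_w`, and
`F_s` for `h ↦ (N ↦ ∑_{0<M<N} f_s(N,M) h(M))`, with `F_0 = id`. Peeling off the largest index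
gives `f_s(N,M) = J_{ξ_1}(N-M) A_{z_1^{s-1}}(N-M)`, so all these operators are lower-triangular
kernels, and composing kernels turns the `q`-integer identity `[d+m] = [d] + q^d [m]` into the
commutation rule `F_s I_u = I_u F_s + I_{ξ_1} ∑_{i=1}^{s} I_{z_1}^i F_{s-i}` for `u ∈ {z_1, ξ_1}`.
This is the recursion defining `φ_s`, so induction on `w` gives `A_{φ_s(w)} = F_s A_w`; the
theorem is this identity summed against `f_{s'}(N, ·)`.
-/

open Finset

lemma qint_pos {q : ℝ} (hq0 : 0 < q) (hq1 : q < 1) {n : ℕ} (hn : n ≠ 0) : 0 < qint q n :=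
  div_pos (sub_pos.2 (pow_lt_one₀ hq0.le hq1 hn)) (sub_pos.2 hq1)

def boolLetter (b : Bool) : Letter := if b then Sum.inr 1 else Sum.inl 1

section Weights

variable {q : ℝ} {d m : ℕ} (hd : qint q d ≠ 0) (hm : qint q m ≠ 0) (hdm : qint q (d + m) ≠ 0)
include hd hm hdm

lemma Jlet_z_mul_Jlet_z :
    Jlet q (.inl 1) d * Jlet q (.inl 1) m =
      Jlet q (.inl 1) (d + m) * (Jlet q (.inr 1) d + Jlet q (.inl 1) m) := by
  obtain ⟨hd, hq⟩ := div_ne_zero_iff.1 hd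
  have hm := (div_ne_zero_iff.1 hm).1
  have hdm := (div_ne_zero_iff.1 hdm).1
  simp only [Jlet, qint, PNat.one_coe, Nat.sub_self, zero_mul, pow_zero, one_mul, pow_one,
    pow_add] at *
  field_simp
  ring

lemma Jlet_xi_mul_Jlet (u : Bool) :
    Jlet q (.inr 1) d * Jlet q (boolLetter u) m =
      Jlet q (boolLetter u) (d + m) * Jlet q (.inr 1) d +
        Jlet q (.inr 1) (d + m) * Jlet q (.inl 1) m := by
  obtain ⟨hd, hq⟩ := div_ne_zero_iff.1 hd
  have hm := (div_ne_zero_iff.1 hm).1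
  have hdm := (div_ne_zero_iff.1 hdm).1
  cases u <;>
  · simp only [boolLetter, Jlet, qint, PNat.one_coe, Nat.sub_self, zero_mul, pow_zero, one_mul,
      pow_one, pow_add, Bool.false_eq_true, if_true, if_false] at *
    field_simp
    ring

end Weights

def strictAntiTuples (r : ℕ) (S : Finset ℕ) : Finset (Fin r → ℕ) :=
  (Fintype.piFinset fun _ => S).filter fun m => ∀ i j, i < j → m j < m i

lemma cons_mem_strictAntiTuples {r : ℕ} {S : Finset ℕ} {a : ℕ} {t : Fin r → ℕ} :
    (Fin.cons a t : Fin (r + 1) → ℕ) ∈ strictAntiTuples (r + 1) S ↔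
      a ∈ S ∧ t ∈ strictAntiTuples r (S.filter (· < a)) := by
  simp only [strictAntiTuples, mem_filter, Fintype.mem_piFinset, Fin.forall_fin_succ,
    Fin.cons_zero, Fin.cons_succ, Fin.succ_lt_succ_iff, Fin.succ_pos, Fin.not_lt_zero,
    true_implies, false_implies, true_and]
  grind

lemma sum_strictAntiTuples_succ {r : ℕ} (S : Finset ℕ) (F : (Fin (r + 1) → ℕ) → ℝ) :
    ∑ m ∈ strictAntiTuples (r + 1) S, F m =
      ∑ a ∈ S, ∑ t ∈ strictAntiTuples r (S.filter (· < a)), F (Fin.cons a t) := by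
  rw [sum_sigma']
  refine sum_nbij' (fun m => ⟨m 0, Fin.tail m⟩) (fun x => Fin.cons x.1 x.2) ?_ ?_ ?_ ?_ ?_
  · intro m hm
    rw [← Fin.cons_self_tail m, cons_mem_strictAntiTuples] at hm
    simpa using hm
  · rintro ⟨a, t⟩ h
    simpa [cons_mem_strictAntiTuples] using h
  · intro m _; simp
  · rintro ⟨a, t⟩ _; simp
  · intro m _; simp

lemma sum_strictAntiTuples_Ioo_sub {r : ℕ} (M N : ℕ) (F : (Fin r → ℕ) → ℝ) :
    ∑ t ∈ strictAntiTuples r (Ioo M N), F (fun j => t j - M) =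
      ∑ a ∈ strictAntiTuples r (Ioo 0 (N - M)), F a := by
  refine sum_nbij' (fun t j => t j - M) (fun a j => a j + M) ?_ ?_ ?_ ?_ ?_ <;>
    simp only [strictAntiTuples, mem_filter, Fintype.mem_piFinset, mem_Ioo]
  · exact fun t ⟨hM, hanti⟩ => ⟨fun j => by grind, fun i j hij => by grind⟩
  · exact fun a ⟨hM, hanti⟩ => ⟨fun j => by grind, fun i j hij => by grind⟩
  · exact fun t ⟨hM, _⟩ => funext fun j => by grind
  · exact fun a _ => funext fun j => by grind
  · intros; trivial

lemma AW_nil (q : ℝ) (M : ℕ) : AW q [] M = 1 := by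
  simp [AW]

lemma AW_cons (q : ℝ) (u : Letter) (w : List Letter) (M : ℕ) :
    AW q (u :: w) M = ∑ a ∈ Ioo 0 M, Jlet q u a * AW q w a := by
  change ∑ m ∈ strictAntiTuples (w.length + 1) (Ioo 0 M), _ = _
  rw [sum_strictAntiTuples_succ]
  refine sum_congr rfl fun a ha => ?_
  rw [Ioo_filter_lt, min_eq_right (mem_Ioo.1 ha).2.le, AW, mul_sum]
  simp [Fin.prod_univ_succ, strictAntiTuples]

lemma sum_strictAntiTuples_prod_eq_AW_replicate (q : ℝ) (u : Letter) (r d : ℕ) :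
    ∑ a ∈ strictAntiTuples r (Ioo 0 d), ∏ j, Jlet q u (a j) = AW q (List.replicate r u) d := by
  induction r generalizing d with
  | zero => simp [strictAntiTuples, AW_nil]
  | succ r ih =>
    rw [sum_strictAntiTuples_succ, List.replicate_succ, AW_cons]
    refine sum_congr rfl fun a ha => ?_
    rw [Ioo_filter_lt, min_eq_right (mem_Ioo.1 ha).2.le, ← ih, mul_sum]
    simp [Fin.prod_univ_succ]

lemma fS_succ_of_lt (q : ℝ) (t : ℕ) {M N : ℕ} (h : M < N) :
    fS q (t + 1) N M = Jlet q (.inr 1) (N - M) * AW q (List.replicate t (.inl 1)) (N - M) := by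
  have hfilter : (Fintype.piFinset fun _ : Fin (t + 1) => Ioc M N).filter
      (fun k => (∀ i j : Fin (t + 1), i < j → k j < k i) ∧ ∀ h : 0 < t + 1, k ⟨0, h⟩ = N) =
      (strictAntiTuples (t + 1) (Ioc M N)).filter (fun k => k 0 = N) := by
    simp [strictAntiTuples, filter_filter]
  have hIoc : (Ioc M N).filter (· < N) = Ioo M N := by ext; simp; omega
  rw [fS, hfilter, sum_filter, sum_strictAntiTuples_succ,
    sum_eq_single_of_mem N (right_mem_Ioc.2 h)]
  · rw [hIoc, ← sum_strictAntiTuples_prod_eq_AW_replicate, ← sum_strictAntiTuples_Ioo_sub, mul_sum]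
    refine sum_congr rfl fun k _ => ?_
    simp [Fin.prod_univ_succ, Jlet, div_eq_mul_inv]
  · intro a _ ha
    simp [ha]

lemma sum_Ioo_reflect (f : ℕ → ℝ) (m N : ℕ) :
    ∑ p ∈ Ioo m N, f (N + m - p) = ∑ p ∈ Ioo m N, f p := by
  refine sum_nbij' (fun p => N + m - p) (fun p => N + m - p) ?_ ?_ ?_ ?_ ?_ <;>
    simp only [mem_Ioo] <;> intros <;> first | trivial | omega

lemma sum_Ioo_sub (f : ℕ → ℝ) (m N : ℕ) :
    ∑ p ∈ Ioo m N, f (p - m) = ∑ d ∈ Ioo 0 (N - m), f d := by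
  refine sum_nbij' (fun p => p - m) (fun d => d + m) ?_ ?_ ?_ ?_ ?_ <;>
    simp only [mem_Ioo] <;> intros <;> first | trivial | omega

def kernelOp (K : ℕ → ℕ → ℝ) : Module.End ℝ (ℕ → ℝ) where
  toFun h N := ∑ m ∈ Ioo 0 N, K N m * h m
  map_add' h h' := by funext N; simp [mul_add, sum_add_distrib]
  map_smul' c h := by funext N; simp [mul_sum, mul_left_comm]

lemma kernelOp_apply (K : ℕ → ℕ → ℝ) (h : ℕ → ℝ) (N : ℕ) :
    kernelOp K h N = ∑ m ∈ Ioo 0 N, K N m * h m := rfl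

lemma kernelOp_congr {K L : ℕ → ℕ → ℝ} (hKL : ∀ N m, 0 < m → m < N → K N m = L N m) :
    kernelOp K = kernelOp L := by
  refine LinearMap.ext fun h => funext fun N => ?_
  rw [kernelOp_apply, kernelOp_apply]
  exact sum_congr rfl fun m hm => by rw [hKL N m (mem_Ioo.1 hm).1 (mem_Ioo.1 hm).2]

lemma kernelOp_add (K L : ℕ → ℕ → ℝ) : kernelOp K + kernelOp L = kernelOp (K + L) := by
  refine LinearMap.ext fun h => funext fun N => ?_
  simp [kernelOp_apply, add_mul, sum_add_distrib]

lemma kernelOp_mul_kernelOp (K L : ℕ → ℕ → ℝ) :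
    kernelOp K * kernelOp L = kernelOp fun N m => ∑ p ∈ Ioo m N, K N p * L p m := by
  refine LinearMap.ext fun h => funext fun N => ?_
  simp only [Module.End.mul_apply, kernelOp_apply, mul_sum, sum_mul, mul_assoc]
  exact sum_comm' fun p m => by simp only [mem_Ioo]; omega

def prependOp (q : ℝ) (u : Letter) : Module.End ℝ (ℕ → ℝ) := kernelOp fun _ m => Jlet q u m

/-- `fS q 0` is identically `1`, not the identity kernel, so `fOp q 0` is set to `1` by hand,
matching `φ_0 = id`. -/
def fOp (q : ℝ) : ℕ → Module.End ℝ (ℕ → ℝ)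
  | 0 => 1
  | s + 1 => kernelOp (fS q (s + 1))

def commutatorKernel (q : ℝ) (t N m : ℕ) : ℝ :=
  Jlet q (.inl 1) m * AW q (List.replicate t (.inl 1)) (N - m)

section Kernels

variable {q : ℝ} (hq : ∀ n, 0 < n → qint q n ≠ 0)
include hq

lemma fOp_succ_mul_prependOp (t : ℕ) (u : Bool) :
    fOp q (t + 1) * prependOp q (boolLetter u) =
      prependOp q (boolLetter u) * fOp q (t + 1) +
        prependOp q (.inr 1) * kernelOp (commutatorKernel q t) := by
  simp only [fOp, prependOp, kernelOp_mul_kernelOp, kernelOp_add]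
  refine kernelOp_congr fun N m hm hmN => ?_
  -- `f_{t+1}(N, p)` depends only on `N - p`, so reflect `p ↦ N + m - p`.
  rw [Pi.add_apply, Pi.add_apply, ← sum_add_distrib,
    ← sum_Ioo_reflect (fun p => fS q (t + 1) N p * Jlet q (boolLetter u) m)]
  refine sum_congr rfl fun p hp => ?_
  obtain ⟨hmp, hpN⟩ := mem_Ioo.1 hp
  rw [fS_succ_of_lt q t (by omega : N + m - p < N), fS_succ_of_lt q t hmp,
    show N - (N + m - p) = p - m by omega, commutatorKernel]
  have key := Jlet_xi_mul_Jlet (hq (p - m) (by omega)) (hq m hm)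
    (by rw [Nat.sub_add_cancel hmp.le]; exact hq p (by omega)) u
  rw [Nat.sub_add_cancel hmp.le] at key
  linear_combination AW q (List.replicate t (.inl 1)) (p - m) * key

lemma sum_prependOp_pow_mul_fOp (t : ℕ) :
    ∑ i ∈ range (t + 1), prependOp q (.inl 1) ^ (i + 1) * fOp q (t - i) =
      kernelOp (commutatorKernel q t) := by
  induction t with
  | zero =>
    simp only [zero_add, range_one, sum_singleton, pow_one, Nat.sub_zero, fOp, mul_one, prependOp]
    exact kernelOp_congr fun N m _ _ => by simp [commutatorKernel, AW_nil]
  | succ t ih =>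
    have hshift : ∀ i ∈ range (t + 1),
        prependOp q (.inl 1) ^ (i + 1 + 1) * fOp q (t + 1 - (i + 1)) =
          prependOp q (.inl 1) * (prependOp q (.inl 1) ^ (i + 1) * fOp q (t - i)) := by
      intro i _
      rw [pow_succ', mul_assoc, Nat.add_sub_add_right]
    rw [sum_range_succ', sum_congr rfl hshift, ← mul_sum, ih, zero_add, pow_one, Nat.sub_zero,
      ← mul_add, fOp, prependOp, kernelOp_add, kernelOp_mul_kernelOp]
    refine kernelOp_congr fun N m hm hmN => ?_
    rw [commutatorKernel, List.replicate_succ, AW_cons, ← sum_Ioo_sub, mul_sum]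
    refine sum_congr rfl fun p hp => ?_
    obtain ⟨hmp, hpN⟩ := mem_Ioo.1 hp
    rw [Pi.add_apply, Pi.add_apply, fS_succ_of_lt q t hmp, commutatorKernel]
    have key := Jlet_z_mul_Jlet_z (hq (p - m) (by omega)) (hq m hm)
      (by rw [Nat.sub_add_cancel hmp.le]; exact hq p (by omega))
    rw [Nat.sub_add_cancel hmp.le] at key
    linear_combination -AW q (List.replicate t (.inl 1)) (p - m) * key

end Kernels

lemma Amap_add (q : ℝ) (x y : Dfree) (M : ℕ) : Amap q (x + y) M = Amap q x M + Amap q y M := by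
  unfold Amap
  rw [MonoidAlgebra.coeff_add]
  exact Finsupp.sum_add_index' (fun _ => by simp) (fun _ _ _ => by push_cast; ring)

def seqA (q : ℝ) : DOne →+ (ℕ → ℝ) where
  toFun x N := Amap q (toD1 x) N
  map_zero' := funext fun _ => Finsupp.sum_zero_index
  map_add' x y := funext fun N => by
    simp only [toD1, MonoidAlgebra.coeff_add, Finsupp.mapDomain_add]
    exact Amap_add q _ _ N

lemma seqA_single (q : ℝ) (w : FreeMonoid Bool) (a : ℤ) :
    seqA q (MonoidAlgebra.single w a) = fun N => a * AW q (w.toList.map boolLetter) N := by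
  funext N
  change Amap q (MonoidAlgebra.mapDomain (FreeMonoid.map boolLetter) _) N = _
  rw [MonoidAlgebra.mapDomain_single, Amap, MonoidAlgebra.coeff_single,
    Finsupp.sum_single_index (by simp), FreeMonoid.toList_map]

lemma seqA_of_mul (q : ℝ) (u : Bool) (x : DOne) :
    seqA q (MonoidAlgebra.single (FreeMonoid.of u) 1 * x) =
      prependOp q (boolLetter u) (seqA q x) := by
  induction x using MonoidAlgebra.induction_linear with
  | zero => simp
  | add x y hx hy => rw [mul_add, map_add, map_add, hx, hy, map_add]
  | single w a =>
    rw [MonoidAlgebra.single_mul_single, one_mul, seqA_single, seqA_single]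
    funext N
    simp only [FreeMonoid.toList_mul, FreeMonoid.toList_of, List.singleton_append, List.map_cons,
      AW_cons, prependOp, kernelOp_apply, mul_sum]
    exact sum_congr rfl fun _ _ => by ring

lemma seqA_zO_pow_mul (q : ℝ) (i : ℕ) (x : DOne) :
    seqA q (zO ^ i * x) = (prependOp q (.inl 1) ^ i) (seqA q x) := by
  induction i with
  | zero => simp
  | succ i ih =>
    rw [pow_succ', mul_assoc, pow_succ', Module.End.mul_apply, ← ih]
    exact seqA_of_mul q false _

lemma phiW_zero (L : List Bool) : phiW 0 L = MonoidAlgebra.of ℤ _ (FreeMonoid.ofList L) := by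
  induction L with
  | nil => simp [phiW, MonoidAlgebra.one_def]
  | cons u L ih =>
    cases u <;> simp [phiW, ih, zO, xiO, FreeMonoid.ofList_cons, MonoidAlgebra.single_mul_single]

lemma phiW_succ_nil (t : ℕ) :
    phiW (t + 1) [] =
      MonoidAlgebra.of ℤ _ (FreeMonoid.ofList (true :: List.replicate t false)) := by
  simp [phiW]

lemma phiW_succ_cons (t : ℕ) (u : Bool) (L : List Bool) :
    phiW (t + 1) (u :: L) = MonoidAlgebra.single (FreeMonoid.of u) 1 * phiW (t + 1) L +
      xiO * ∑ i ∈ range (t + 1), zO ^ (i + 1) * phiW (t - i) L := by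
  cases u
  · have h := sum_Ico_add' (fun i => xiO * zO ^ i * phiW (t + 1 - i) L) 0 (t + 1) 1
    rw [zero_add, Ico_add_one_right_eq_Icc, Ico_add_one_right_eq_Icc,
      ← Nat.range_succ_eq_Icc_zero] at h
    rw [phiW, ← h, mul_sum]
    simp [mul_assoc, zO]
  · rw [phiW, sum_range_succ', mul_sum]
    simp [mul_assoc, add_comm, xiO]

section Main

variable {q : ℝ} (hq : ∀ n, 0 < n → qint q n ≠ 0)
include hq

lemma seqA_phiW (L : List Bool) (s : ℕ) :
    seqA q (phiW s L) = fOp q s (seqA q (MonoidAlgebra.of ℤ _ (FreeMonoid.ofList L))) := by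
  induction L generalizing s with
  | nil =>
    rcases s with _ | t
    · rw [phiW_zero, fOp, Module.End.one_apply]
    funext N
    rw [phiW_succ_nil, fOp, kernelOp_apply, ← sum_Ioo_reflect _ 0 N]
    simp only [MonoidAlgebra.of_apply, seqA_single, FreeMonoid.toList_ofList, List.map_cons,
      List.map_replicate, List.map_nil, AW_nil, AW_cons, Int.cast_one, one_mul, mul_one]
    refine sum_congr rfl fun d hd => ?_
    obtain ⟨hd0, hdN⟩ := mem_Ioo.1 hd
    rw [fS_succ_of_lt q t (by omega), show N - (N + 0 - d) = d by omega]
    rfl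
  | cons u L ih =>
    rcases s with _ | t
    · rw [phiW_zero, fOp, Module.End.one_apply]
    rw [phiW_succ_cons, map_add, seqA_of_mul, xiO, seqA_of_mul, map_sum]
    simp only [seqA_zO_pow_mul, ih, FreeMonoid.ofList_cons, map_mul, MonoidAlgebra.of_apply]
    rw [seqA_of_mul, ← Module.End.mul_apply (fOp q (t + 1)), fOp_succ_mul_prependOp hq,
      ← sum_prependOp_pow_mul_fOp hq]
    simp [Module.End.mul_apply]
    rfl

lemma seqA_phi (s : ℕ) (x : DOne) : seqA q (phi s x) = fOp q s (seqA q x) := by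
  induction x using MonoidAlgebra.induction_linear with
  | zero => simp [phi]
  | add x y hx hy =>
    have hadd : phi s (x + y) = phi s x + phi s y :=
      Finsupp.sum_add_index' (fun _ => zero_smul ℤ _) fun _ _ _ => add_smul _ _ _
    rw [hadd, map_add, map_add, hx, hy, map_add]
  | single w a =>
    have hsingle : phi s (MonoidAlgebra.single w a) = a • phiW s w.toList :=
      Finsupp.sum_single_index (zero_smul ℤ _)
    rw [hsingle, map_zsmul, seqA_phiW hq, ← map_zsmul, ← map_zsmul, MonoidAlgebra.of_apply,
      FreeMonoid.ofList_toList, MonoidAlgebra.smul_single', mul_one]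

end Main

theorem ff_contraction_general (q : ℝ) (hq0 : 0 < q) (hq1 : q < 1) (w : DOne)
    (s s' N : ℕ) (hs : 0 < s) :
    (∑ M1 ∈ Finset.Ioo 0 N, ∑ M2 ∈ Finset.Ioo 0 M1,
        fS q s' N M1 * fS q s M1 M2 * Amap q (toD1 w) M2) =
      ∑ M ∈ Finset.Ioo 0 N, fS q s' N M * Amap q (toD1 (phi s w)) M := by
  obtain ⟨t, rfl⟩ : ∃ t, s = t + 1 := ⟨s - 1, by omega⟩
  have hq : ∀ n, 0 < n → qint q n ≠ 0 := fun n hn => (qint_pos hq0 hq1 hn.ne').ne'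
  have inner : ∀ M1, ∑ M2 ∈ Ioo 0 M1, fS q (t + 1) M1 M2 * Amap q (toD1 w) M2 =
      Amap q (toD1 (phi (t + 1) w)) M1 :=
    fun M1 => (congrFun (seqA_phi hq (t + 1) w) M1).symm
  simp_rw [mul_assoc, ← mul_sum, inner]

/-- For every `w ∈ 𝔡₁` and all positive integers `s`, `s'` and `N`,
`Σ_{N>M_1>M_2>0} f_{s'}(N,M_1) f_s(M_1,M_2) A_w(M_2) = Σ_{N>M>0} f_{s'}(N,M) A_{φ_s(w)}(M)`. -/
theorem ff_contraction (q : ℝ) (hq0 : 0 < q) (hq1 : q < 1) (w : DOne)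
    (s s' N : ℕ) (hs : 0 < s) (hs' : 0 < s') (hN : 0 < N) :
    (∑ M1 ∈ Finset.Ioo 0 N, ∑ M2 ∈ Finset.Ioo 0 M1,
        fS q s' N M1 * fS q s M1 M2 * Amap q (toD1 w) M2) =
      ∑ M ∈ Finset.Ioo 0 N, fS q s' N M * Amap q (toD1 (phi s w)) M :=
  ff_contraction_general q hq0 hq1 w s s' N hs

end
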